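/- Let f₁ and f₂ be admissible functions. Then there exists a sequence (g_i)_{i∈ℕ} of admissible functions, pairwise non-equivalent, such that for each i there exists a permutation σ of ℕ with the following properties: (i) g_i is a monotone rearrangement of f₁·(f₂∘σ); (ii) there is a surjective linear isometry ℓ²_{f₁} → ℓ² mapping ℓ²_{f₁·(f₂∘σ)} isometrically onto ℓ²_{f₂}, so the pair (ℓ²_{f₁}, ℓ²_{f₁·(f₂∘σ)}) is scale isometric to (ℓ², ℓ²_{f₂}); and (iii) there is a surjective linear isometry ℓ² → ℓ² mapping ℓ²_{g_i} isometrically onto ℓ²_{f₁·(f₂∘σ)}, so the pair (ℓ², ℓ²_{f₁·(f₂∘σ)}) is scale isometric to (ℓ², ℓ²_{g_i}). In particular, the scale Hilbert triple ℓ² ⊇ ℓ²_{f₁} ⊇ ℓ²_{f₁·(f₂∘σ)} realizes the triple of invariants ([f₁], [f₂], [g_i]), and infinitely many pairwise non-equivalent classes [g_i] are realized this way. -/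

import Mathlib

noncomputable section

/-- `f` is admissible: positive, monotone nondecreasing, and unbounded. -/
def Admissible (f : ℕ → ℝ) : Prop :=
  (∀ n, 0 < f n) ∧ Monotone f ∧ ¬ BddAbove (Set.range f)

/-- Membership in the weighted space `ℓ²_f`: `∑ f n * x n ^ 2 < ∞`. -/
def MemW (f : ℕ → ℝ) (x : ℕ → ℝ) : Prop :=
  Summable fun n => f n * x n ^ 2

/-- The `ℓ²_f` norm of a sequence, `(∑ f n * x n ^ 2)^(1/2)`. -/
noncomputable def wNorm (f : ℕ → ℝ) (x : ℕ → ℝ) : ℝ :=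
  Real.sqrt (∑' n, f n * x n ^ 2)

/-- Equivalence of positive weight functions: `(1/c) f₁ ≤ f₂ ≤ c f₁`. -/
def FEquiv (f₁ f₂ : ℕ → ℝ) : Prop :=
  ∃ c : ℝ, 0 < c ∧ ∀ n, (1 / c) * f₁ n ≤ f₂ n ∧ f₂ n ≤ c * f₁ n

/-- The Hilbert space `ℓ²` of square-summable real sequences. -/
abbrev L2 := lp (fun _ : ℕ => ℝ) 2

/-- `g` is the monotone rearrangement of `u`: `g = u ∘ τ` for some permutation
`τ`, and `g` is monotone nondecreasing. -/
def IsMonoRearrange (u g : ℕ → ℝ) : Prop :=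
  ∃ τ : Equiv.Perm ℕ, (∀ n, g n = u (τ n)) ∧ Monotone g

/-- the pointwise product `f₁ · (f₂ ∘ σ)`. -/
def twist (f₁ f₂ : ℕ → ℝ) (σ : Equiv.Perm ℕ) : ℕ → ℝ :=
  fun n => f₁ n * f₂ (σ n)

/-- A surjective linear isometry of pairs `(ℓ²_f, ℓ²_g) → (ℓ²_{f'}, ℓ²_{g'})`:
a linear map of sequences restricting to norm-preserving bijections
`ℓ²_f → ℓ²_{f'}` and `ℓ²_g → ℓ²_{g'}`. -/
def ScaleIsometryPair (f g f' g' : ℕ → ℝ) : Prop :=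
  ∃ T : (ℕ → ℝ) →ₗ[ℝ] (ℕ → ℝ),
    Set.BijOn T {x | MemW f x} {x | MemW f' x} ∧
    (∀ x, MemW f x → wNorm f' (T x) = wNorm f x) ∧
    Set.BijOn T {x | MemW g x} {x | MemW g' x} ∧
    (∀ x, MemW g x → wNorm g' (T x) = wNorm g x)

/-!
Pair the indices back and forth: there are bijections `X, Y` of `ℕ` with
`h t ≤ f₁ (X t) * f₂ (Y t)` for all `t`, obtained by alternately matching the least unused index
on one side with an unused index on the other side so large that the product exceeds `h t`.
For `σ = Y ∘ X⁻¹` every value `h t` is then dominated by a distinct value of `f₁ · (f₂ ∘ σ)`,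
so the monotone rearrangement of `f₁ · (f₂ ∘ σ)` dominates `h` whenever `h` is monotone.
Taking for `h` the running maximum of `(n + 1) · g_i` yields `g_{i+1} ≥ (n + 1) · g_i`, which
rules out `g_i ∼ g_j`. Both isometries are weighted permutations of coordinates,
`x ↦ (√f₁ · x) ∘ σ⁻¹` and `x ↦ x ∘ τ⁻¹`.
-/

open Filter Function

section Greedy

variable {α : Type*} [DecidableEq α] (next : ℕ → Finset α → α)

def greedyUsed : ℕ → Finset α
  | 0 => ∅
  | n + 1 => insert (next n (greedyUsed n)) (greedyUsed n)

def greedySeq (n : ℕ) : α :=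
  next n (greedyUsed next n)

theorem greedyUsed_eq_image (n : ℕ) :
    greedyUsed next n = (Finset.range n).image (greedySeq next) := by
  induction n with
  | zero => rfl
  | succ n ih => rw [Finset.range_add_one, Finset.image_insert, ← ih]; rfl

theorem greedySeq_mem_greedyUsed {m n : ℕ} (h : m < n) :
    greedySeq next m ∈ greedyUsed next n := by
  rw [greedyUsed_eq_image]
  exact Finset.mem_image_of_mem _ (Finset.mem_range.2 h)

variable {β : Type*} [DecidableEq β] (f : α → β)

theorem injective_comp_greedySeq (hf : ∀ n s, f (next n s) ∉ s.image f) :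
    Injective (f ∘ greedySeq next) := by
  refine Injective.of_lt_imp_ne fun m n hmn heq => hf n (greedyUsed next n) ?_
  change f (greedySeq next n) ∈ _
  rw [← show f (greedySeq next m) = f (greedySeq next n) from heq]
  exact Finset.mem_image_of_mem f (greedySeq_mem_greedyUsed next hmn)

theorem surjective_comp_greedySeq (hf : ∀ n s, f (next n s) ∉ s.image f)
    {N : ℕ → ℕ} (hN : Injective N)
    (hfin : ∀ b, ∃ S : Set β, S.Finite ∧ ∀ k s, b ∉ s.image f → f (next (N k) s) ∈ S) :
    Surjective (f ∘ greedySeq next) := by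
  intro b
  by_contra hb
  obtain ⟨S, hS, hmem⟩ := hfin b
  have hmissing (n : ℕ) : b ∉ (greedyUsed next n).image f := by
    rw [greedyUsed_eq_image, Finset.image_image]
    rintro hbn
    obtain ⟨k, -, hk⟩ := Finset.mem_image.1 hbn
    exact hb ⟨k, hk⟩
  exact Set.infinite_of_injective_forall_mem
    ((injective_comp_greedySeq next f hf).comp hN) (fun k => hmem k _ (hmissing (N k))) hS

end Greedy

section BackAndForth

variable {R : ℕ → ℕ → ℕ → Prop}

/-- The parity of `t` decides which side is matched by its least unused index; this is what
makes both coordinates of the back-and-forth enumeration onto. -/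
theorem exists_backForth_step (fwd : ∀ t x (s : Finset ℕ), ∃ y ∉ s, R t x y)
    (bwd : ∀ t y (s : Finset ℕ), ∃ x ∉ s, R t x y) (t : ℕ) (used : Finset (ℕ × ℕ)) :
    ∃ p : ℕ × ℕ, p.1 ∉ used.image Prod.fst ∧ p.2 ∉ used.image Prod.snd ∧ R t p.1 p.2 ∧
      (Even t → ∀ m ∉ used.image Prod.fst, p.1 ≤ m) ∧
      (¬ Even t → ∀ m ∉ used.image Prod.snd, p.2 ≤ m) := by
  classical
  by_cases ht : Even t
  · have hx := Infinite.exists_notMem_finset (used.image Prod.fst)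
    obtain ⟨y, hy, hR⟩ := fwd t (Nat.find hx) (used.image Prod.snd)
    exact ⟨(Nat.find hx, y), Nat.find_spec hx, hy, hR, fun _ _ hm => Nat.find_min' hx hm,
      fun h => absurd ht h⟩
  · have hy := Infinite.exists_notMem_finset (used.image Prod.snd)
    obtain ⟨x, hx, hR⟩ := bwd t (Nat.find hy) (used.image Prod.fst)
    exact ⟨(x, Nat.find hy), hx, Nat.find_spec hy, hR, fun h => absurd h ht,
      fun _ _ hm => Nat.find_min' hy hm⟩

theorem exists_perm_perm_forall (fwd : ∀ t x (s : Finset ℕ), ∃ y ∉ s, R t x y)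
    (bwd : ∀ t y (s : Finset ℕ), ∃ x ∉ s, R t x y) :
    ∃ X Y : Equiv.Perm ℕ, ∀ t, R t (X t) (Y t) := by
  classical
  choose next hfst hsnd hR hfst_le hsnd_le using exists_backForth_step fwd bwd
  have hX : Bijective (Prod.fst ∘ greedySeq next) :=
    ⟨injective_comp_greedySeq next _ hfst,
      surjective_comp_greedySeq next _ hfst (N := fun k => 2 * k) (fun _ _ h => by simpa using h)
        fun m => ⟨Set.Iic m, Set.finite_Iic m,
          fun k s hm => hfst_le _ s (even_two_mul k) m hm⟩⟩
  have hY : Bijective (Prod.snd ∘ greedySeq next) :=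
    ⟨injective_comp_greedySeq next _ hsnd,
      surjective_comp_greedySeq next _ hsnd (N := fun k => 2 * k + 1)
        (fun _ _ h => by simpa using h)
        fun m => ⟨Set.Iic m, Set.finite_Iic m,
          fun k s hm => hsnd_le _ s (Nat.not_even_two_mul_add_one k) m hm⟩⟩
  exact ⟨Equiv.ofBijective _ hX, Equiv.ofBijective _ hY, fun t => hR t _⟩

end BackAndForth

section Rearrangement

variable {β : Type*} [LinearOrder β]

theorem exists_notMem_forall_le {α : Type*} {u : α → β} (hu : Tendsto u cofinite atTop)
    (s : Finset α) (hs : ∃ a, a ∉ s) : ∃ m ∉ s, ∀ k ∉ s, u m ≤ u k := by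
  have : Nonempty {k : α // k ∉ s} := let ⟨a, ha⟩ := hs; ⟨⟨a, ha⟩⟩
  obtain ⟨⟨m, hm⟩, hmin⟩ :=
    (hu.comp (Subtype.val_injective (p := (· ∉ s))).tendsto_cofinite).exists_forall_le
  exact ⟨m, hm, fun k hk => hmin ⟨k, hk⟩⟩

/-- Selection sort: repeatedly take an unused index of least value. -/
theorem exists_perm_monotone_comp [NoMaxOrder β] {u : ℕ → β} (hu : Tendsto u atTop atTop) :
    ∃ τ : Equiv.Perm ℕ, Monotone (u ∘ τ) := by
  rw [← Nat.cofinite_eq_atTop] at hu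
  choose next hnext hmin using fun s : Finset ℕ =>
    exists_notMem_forall_le hu s (Infinite.exists_notMem_finset s)
  have hfresh (_ : ℕ) (s : Finset ℕ) : id (next s) ∉ s.image id := by
    simpa using hnext s
  have hbij : Bijective (id ∘ greedySeq fun _ => next) :=
    ⟨injective_comp_greedySeq _ id hfresh,
      surjective_comp_greedySeq _ id hfresh injective_id fun m =>
        ⟨{k | u k ≤ u m}, by simpa using hu.eventually_gt_atTop (u m),
          fun _ s hm => hmin s m (by simpa using hm)⟩⟩
  refine ⟨Equiv.ofBijective _ hbij, monotone_nat_of_le_succ fun n => hmin _ _ ?_⟩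
  have := hnext (greedyUsed (fun _ => next) (n + 1))
  rw [greedyUsed, Finset.mem_insert, not_or] at this
  exact this.2

/-- Otherwise the `n + 1` indices `ι⁻¹ (τ m)`, `m ≤ n`, would all lie below `n`. -/
theorem le_comp_perm_of_monotone {u h : ℕ → β} {τ ι : Equiv.Perm ℕ} (hτ : Monotone (u ∘ τ))
    (hh : Monotone h) (hι : ∀ t, h t ≤ u (ι t)) (n : ℕ) : h n ≤ u (τ n) := by
  by_contra! hlt
  have hmaps : Set.MapsTo (fun m => ι.symm (τ m)) (Finset.range (n + 1)) (Finset.range n) := by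
    intro m hm
    simp only [Finset.coe_range, Set.mem_Iio] at hm ⊢
    by_contra! hge
    have hdom := hι (ι.symm (τ m))
    rw [Equiv.apply_symm_apply] at hdom
    exact ((hh hge).trans hdom).not_gt ((hτ (Nat.lt_succ_iff.1 hm)).trans_lt hlt)
  have := Finset.card_le_card_of_injOn _ hmaps fun a _ b _ hab => by simpa using hab
  simp at this

end Rearrangement

theorem Admissible.tendsto_atTop {f : ℕ → ℝ} (hf : Admissible f) : Tendsto f atTop atTop := by
  refine (hf.2.1.tendsto_atTop_atTop_iff).2 fun c => ?_
  obtain ⟨_, ⟨n, rfl⟩, hn⟩ := not_bddAbove_iff.1 hf.2.2 c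
  exact ⟨n, hn.le⟩

theorem twist_pos {f₁ f₂ : ℕ → ℝ} (h₁ : ∀ n, 0 < f₁ n) (h₂ : ∀ n, 0 < f₂ n)
    (σ : Equiv.Perm ℕ) (n : ℕ) : 0 < twist f₁ f₂ σ n :=
  mul_pos (h₁ n) (h₂ (σ n))

theorem tendsto_twist_atTop {f₁ f₂ : ℕ → ℝ} (h₁ : Tendsto f₁ atTop atTop) (h₂ : Admissible f₂)
    (σ : Equiv.Perm ℕ) : Tendsto (twist f₁ f₂ σ) atTop atTop := by
  refine tendsto_atTop_mono' _ ?_ (h₁.atTop_mul_const (h₂.1 0))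
  filter_upwards [h₁.eventually_ge_atTop 0] with n hn
  exact mul_le_mul_of_nonneg_left (h₂.2.1 (Nat.zero_le _)) hn

theorem exists_notMem_le_const_mul {b : ℕ → ℝ} (hb : Tendsto b atTop atTop) {r : ℝ}
    (hr : 0 < r) (c : ℝ) (s : Finset ℕ) : ∃ y ∉ s, c ≤ r * b y := by
  have hs := s.eventually_cofinite_notMem
  rw [Nat.cofinite_eq_atTop] at hs
  exact (hs.and ((hb.const_mul_atTop hr).eventually_ge_atTop c)).exists

theorem exists_perm_forall_le_twist {a b : ℕ → ℝ} (ha : Admissible a) (hb : Admissible b)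
    (h : ℕ → ℝ) : ∃ σ ι : Equiv.Perm ℕ, ∀ t, h t ≤ twist a b σ (ι t) := by
  obtain ⟨X, Y, hXY⟩ := exists_perm_perm_forall (R := fun t x y => h t ≤ a x * b y)
    (fun t x => exists_notMem_le_const_mul hb.tendsto_atTop (ha.1 x) (h t))
    (fun t y s => by
      simpa only [mul_comm (a _)] using
        exists_notMem_le_const_mul ha.tendsto_atTop (hb.1 y) (h t) s)
  exact ⟨X.symm.trans Y, X, fun t => by simpa [twist] using hXY t⟩

theorem exists_admissible_isMonoRearrange_ge {f₁ f₂ : ℕ → ℝ} (h₁ : Admissible f₁)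
    (h₂ : Admissible f₂) (h : ℕ → ℝ) :
    ∃ g σ, Admissible g ∧ (∀ n, h n ≤ g n) ∧ IsMonoRearrange (twist f₁ f₂ σ) g := by
  obtain ⟨σ, ι, hι⟩ := exists_perm_forall_le_twist h₁ h₂ (partialSups h)
  have hu := tendsto_twist_atTop h₁.tendsto_atTop h₂ σ
  obtain ⟨τ, hτ⟩ := exists_perm_monotone_comp hu
  refine ⟨twist f₁ f₂ σ ∘ τ, σ, ⟨fun n => twist_pos h₁.1 h₂.1 σ _, hτ, ?_⟩,
    fun n => (le_partialSups h n).trans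
      (le_comp_perm_of_monotone hτ (partialSups h).monotone hι n),
    τ, fun _ => rfl, hτ⟩
  rw [EquivLike.range_comp]
  exact not_bddAbove_of_tendsto_atTop hu

section Isometry

/-- The coordinate map `x ↦ (s · x) ∘ e⁻¹`. -/
def weightedPerm (s : ℕ → ℝ) (hs : ∀ n, s n ≠ 0) (e : Equiv.Perm ℕ) :
    (ℕ → ℝ) ≃ₗ[ℝ] (ℕ → ℝ) :=
  (LinearEquiv.piCongrRight fun n => LinearEquiv.smulOfNeZero ℝ ℝ (s n) (hs n)).trans
    (LinearEquiv.funCongrLeft ℝ ℝ e.symm)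

variable {w w' s : ℕ → ℝ} {hs : ∀ n, s n ≠ 0} {e : Equiv.Perm ℕ}

theorem weightedPerm_summand (hw : ∀ m, w' (e m) * s m ^ 2 = w m) (x : ℕ → ℝ) :
    (fun n => w' n * weightedPerm s hs e x n ^ 2) = (fun m => w m * x m ^ 2) ∘ e.symm := by
  ext n
  simp only [weightedPerm, LinearEquiv.trans_apply, LinearEquiv.funCongrLeft_apply,
    LinearMap.funLeft_apply, LinearEquiv.piCongrRight_apply, LinearEquiv.smulOfNeZero_apply,
    smul_eq_mul, comp_apply, ← hw (e.symm n), Equiv.apply_symm_apply]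
  ring

theorem memW_weightedPerm_iff (hw : ∀ m, w' (e m) * s m ^ 2 = w m) (x : ℕ → ℝ) :
    MemW w' (weightedPerm s hs e x) ↔ MemW w x := by
  rw [MemW, MemW, weightedPerm_summand hw, e.symm.summable_iff]

theorem wNorm_weightedPerm (hw : ∀ m, w' (e m) * s m ^ 2 = w m) (x : ℕ → ℝ) :
    wNorm w' (weightedPerm s hs e x) = wNorm w x := by
  rw [wNorm, wNorm, weightedPerm_summand hw, comp_def, e.symm.tsum_eq (fun m => w m * x m ^ 2)]

theorem scaleIsometryPair_of_perm {w₁ w₂ w₁' w₂' : ℕ → ℝ} (s : ℕ → ℝ) (hs : ∀ n, s n ≠ 0)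
    (e : Equiv.Perm ℕ) (h₁ : ∀ m, w₁' (e m) * s m ^ 2 = w₁ m)
    (h₂ : ∀ m, w₂' (e m) * s m ^ 2 = w₂ m) : ScaleIsometryPair w₁ w₂ w₁' w₂' :=
  ⟨weightedPerm s hs e,
    (weightedPerm s hs e).toEquiv.bijOn fun x => memW_weightedPerm_iff h₁ x,
    fun x _ => wNorm_weightedPerm h₁ x,
    (weightedPerm s hs e).toEquiv.bijOn fun x => memW_weightedPerm_iff h₂ x,
    fun x _ => wNorm_weightedPerm h₂ x⟩

theorem scaleIsometryPair_twist {f₁ : ℕ → ℝ} (h₁ : ∀ n, 0 < f₁ n) (f₂ : ℕ → ℝ)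
    (σ : Equiv.Perm ℕ) : ScaleIsometryPair f₁ (twist f₁ f₂ σ) (fun _ => 1) f₂ :=
  scaleIsometryPair_of_perm (fun m => √(f₁ m)) (fun m => (Real.sqrt_pos.2 (h₁ m)).ne') σ
    (fun m => by simp [Real.sq_sqrt (h₁ m).le])
    (fun m => by simp [twist, Real.sq_sqrt (h₁ m).le, mul_comm])

theorem IsMonoRearrange.scaleIsometryPair {u g : ℕ → ℝ} (h : IsMonoRearrange u g) :
    ScaleIsometryPair (fun _ => 1) g (fun _ => 1) u := by
  obtain ⟨τ, hg, -⟩ := h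
  exact scaleIsometryPair_of_perm 1 (fun _ => one_ne_zero) τ (fun _ => by simp)
    (fun m => by simp [hg m])

end Isometry

theorem FEquiv.symm {f g : ℕ → ℝ} (h : FEquiv f g) : FEquiv g f := by
  obtain ⟨c, hc, hfg⟩ := h
  refine ⟨c, hc, fun n => ⟨?_, ?_⟩⟩
  · rw [one_div, inv_mul_le_iff₀ hc]
    exact (hfg n).2
  · rw [← div_le_iff₀' hc, div_eq_inv_mul, ← one_div]
    exact (hfg n).1

theorem not_fequiv_of_forall_mul_le {f g : ℕ → ℝ} (hf : ∀ n, 0 < f n)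
    (h : ∀ n : ℕ, ((n : ℝ) + 1) * f n ≤ g n) : ¬ FEquiv f g := by
  rintro ⟨c, -, hfg⟩
  obtain ⟨n, hn⟩ := exists_nat_gt c
  have := (h n).trans (hfg n).2
  nlinarith [hf n]

theorem pairwise_not_fequiv {g : ℕ → ℕ → ℝ} (hpos : ∀ i n, 0 < g i n)
    (hstep : ∀ i (n : ℕ), ((n : ℝ) + 1) * g i n ≤ g (i + 1) n) :
    Pairwise fun i j => ¬ FEquiv (g i) (g j) := by
  have hmono (n : ℕ) : Monotone fun i => g i n := monotone_nat_of_le_succ fun i =>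
    (le_mul_of_one_le_left (hpos i n).le (by linarith [n.cast_nonneg (α := ℝ)])).trans (hstep i n)
  have hdom {i j : ℕ} (hij : i < j) (n : ℕ) : ((n : ℝ) + 1) * g i n ≤ g j n :=
    (hstep i n).trans (hmono n hij)
  intro i j hij
  rcases hij.lt_or_gt with hij | hji
  · exact not_fequiv_of_forall_mul_le (hpos i) (hdom hij)
  · exact fun hfe => not_fequiv_of_forall_mul_le (hpos j) (hdom hji) hfe.symm

/-- For admissible `f₁, f₂` there are infinitely many pairwise non-equivalent
admissible functions `g_i`, each a monotone rearrangement of some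
`f₁·(f₂∘σ)`, such that the scale triple `ℓ² ⊇ ℓ²_{f₁} ⊇ ℓ²_{f₁·(f₂∘σ)}`
satisfies: `(ℓ²_{f₁}, ℓ²_{f₁·(f₂∘σ)})` is scale isometric to `(ℓ², ℓ²_{f₂})`
and `(ℓ², ℓ²_{g_i})` is scale isometric to `(ℓ², ℓ²_{f₁·(f₂∘σ)})`, so the
triple realizes the invariants `([f₁], [f₂], [g_i])`. -/
theorem realize_infinitely_many_triples (f₁ f₂ : ℕ → ℝ)
    (h₁ : Admissible f₁) (h₂ : Admissible f₂) :
    ∃ g : ℕ → (ℕ → ℝ),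
      (∀ i, Admissible (g i)) ∧
      (∀ i j, i ≠ j → ¬ FEquiv (g i) (g j)) ∧
      ∀ i, ∃ σ : Equiv.Perm ℕ,
        IsMonoRearrange (twist f₁ f₂ σ) (g i) ∧
        ScaleIsometryPair f₁ (twist f₁ f₂ σ) (fun _ => 1) f₂ ∧
        ScaleIsometryPair (fun _ => 1) (g i) (fun _ => 1) (twist f₁ f₂ σ) := by
  choose G σ hadm hge hmr using exists_admissible_isMonoRearrange_ge h₁ h₂
  set F : (ℕ → ℝ) → ℕ → ℝ := fun h => G fun n => (n + 1) * h n
  refine ⟨fun i => F (F^[i] 0), fun i => hadm _, ?_, fun i =>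
    ⟨σ _, hmr _, scaleIsometryPair_twist h₁.1 f₂ _, (hmr _).scaleIsometryPair⟩⟩
  refine pairwise_not_fequiv (fun i => (hadm _).1) fun i n => ?_
  rw [iterate_succ_apply' F i 0]
  exact hge (fun n : ℕ => ((n : ℝ) + 1) * F (F^[i] 0) n) n
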